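/- (Latent-conditioned factorization lower bound, Proposition 2) Let (X, Y) ∼ q₀ be jointly distributed with X in X^S, and consider the augmented chain Z̃_t = (X_t, Y₀) where X_t follows the masked forward chain from X₀. For any generative model p^θ(x_{0:T}) = ∫ p^θ_{|y}(x_{0:T}|y) q^Y(dy) where each conditional reverse p^θ_{|y} factorizes across positions, the negative ELBO satisfies L(θ) ≥ Σ_{t=1}^T E[ KL( q_{t−1|t,y}(· | X_t, Y) ‖ ∏_{i=1}^S q^i_{t−1|t,y}(· | X_t, Y) ) ] + E[ H(q_{0|y}(· | Y)) ], where q^i_{t−1|t,y} is the i-th marginal of the true conditional reverse transition. -/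

import Mathlib

open Finset

/-- Single-token masked forward kernel: the mask is absorbing; a non-masked token is kept with
probability `γt` and replaced by the mask with probability `1 − γt`. -/
def tokStep {K : ℕ} (γt : ℝ) (msk a b : Fin K) : ℝ :=
  if a = msk then (if b = msk then 1 else 0)
  else γt * (if b = a then 1 else 0) + (1 - γt) * (if b = msk then 1 else 0)

/-- Masked forward kernel on sequences: coordinates are noised independently. -/
def seqStep {K S : ℕ} (γt : ℝ) (msk : Fin K) (a b : Fin S → Fin K) : ℝ :=
  ∏ i, tokStep γt msk (a i) (b i)

/-- Joint weight of `(Y = y, X_{0:T} = x)` for the masked chain started from the conditional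
`q₀(· , y)`. -/
noncomputable def yQpath {K S T : ℕ} {β : Type*} (γ : Fin T → ℝ) (msk : Fin K)
    (q0 : (Fin S → Fin K) × β → ℝ) (y : β) (x : Fin (T + 1) → (Fin S → Fin K)) : ℝ :=
  q0 (x 0, y) * ∏ t : Fin T, seqStep (γ t) msk (x t.castSucc) (x t.succ)

/-- Joint weight of `(Y = y, X_u = b)`. -/
noncomputable def yMarg {K S T : ℕ} {β : Type*} (γ : Fin T → ℝ) (msk : Fin K)
    (q0 : (Fin S → Fin K) × β → ℝ) (u : Fin (T + 1)) (y : β) (b : Fin S → Fin K) : ℝ :=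
  ∑ x : Fin (T + 1) → (Fin S → Fin K), if x u = b then yQpath γ msk q0 y x else 0

/-- Joint weight of `(Y = y, X_t = a, X_{t+1} = b)`. -/
noncomputable def yJoint {K S T : ℕ} {β : Type*} (γ : Fin T → ℝ) (msk : Fin K)
    (q0 : (Fin S → Fin K) × β → ℝ) (t : Fin T) (y : β) (a b : Fin S → Fin K) : ℝ :=
  ∑ x : Fin (T + 1) → (Fin S → Fin K),
    if x t.castSucc = a ∧ x t.succ = b then yQpath γ msk q0 y x else 0


/-- Gibbs' inequality, unnormalized form. -/
lemma gibbs_aux {α : Type*} [Fintype α] (f g : α → ℝ)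
    (hf : ∀ v, 0 ≤ f v) (hg : ∀ v, 0 < g v) (hfg : ∑ v, f v = ∑ v, g v) :
    0 ≤ ∑ v, f v * Real.log (f v / g v) := by
  have h1 : ∀ v, f v * Real.log (g v / f v) ≤ g v - f v := by
    intro v
    rcases eq_or_lt_of_le (hf v) with h0 | h0
    · simp [← h0]; exact (hg v).le
    · have hlog := Real.log_le_sub_one_of_pos (div_pos (hg v) h0)
      have : f v * Real.log (g v / f v) ≤ f v * (g v / f v - 1) :=
        mul_le_mul_of_nonneg_left hlog h0.le
      calc f v * Real.log (g v / f v) ≤ f v * (g v / f v - 1) := this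
        _ = g v - f v := by field_simp
  have h2 : ∑ v, f v * Real.log (g v / f v) ≤ 0 := by
    calc ∑ v, f v * Real.log (g v / f v) ≤ ∑ v, (g v - f v) :=
          Finset.sum_le_sum fun v _ => h1 v
      _ = 0 := by rw [Finset.sum_sub_distrib, hfg]; ring
  have heq : ∀ v, f v * Real.log (f v / g v) = -(f v * Real.log (g v / f v)) := by
    intro v
    rcases eq_or_lt_of_le (hf v) with h0 | h0
    · simp [← h0]
    · rw [show f v / g v = (g v / f v)⁻¹ by rw [inv_div], Real.log_inv]; ring
  calc (0:ℝ) ≤ -(∑ v, f v * Real.log (g v / f v)) := by linarith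
    _ = ∑ v, f v * Real.log (f v / g v) := by
        rw [← Finset.sum_neg_distrib]
        exact Finset.sum_congr rfl fun v _ => (heq v).symm

/-- Per-block inequality. -/
lemma block_aux {K S : ℕ} (J : (Fin S → Fin K) → ℝ) (p : Fin S → Fin K → ℝ) (M : ℝ)
    (hJ : ∀ a, 0 ≤ J a) (hM : M = ∑ a, J a)
    (hp0 : ∀ i v, 0 < p i v) (hp1 : ∀ i, ∑ v, p i v = 1) :
    ∑ a, J a * Real.log ((J a / M) /
        ∏ i, ((∑ a', if a' i = a i then J a' else 0) / M))
      ≤ ∑ a, J a * Real.log ((J a / M) / ∏ i, p i (a i)) := by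
  by_cases hM0 : M = 0
  · have hz : ∀ a, J a = 0 := by
      have h := (Finset.sum_eq_zero_iff_of_nonneg (fun a _ => hJ a)).mp (by rw [← hM]; exact hM0)
      exact fun a => h a (Finset.mem_univ a)
    simp [hz]
  · have hMnn : 0 ≤ M := hM ▸ Finset.sum_nonneg fun a _ => hJ a
    have hMpos : 0 < M := hMnn.lt_of_ne' hM0
    set Ji : Fin S → Fin K → ℝ := fun i v => ∑ a', if a' i = v then J a' else 0 with hJidef
    have hJinn : ∀ i v, 0 ≤ Ji i v := by
      intro i v
      exact Finset.sum_nonneg fun a _ => by split <;> simp [hJ]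
    have hJisum : ∀ i, ∑ v, Ji i v = M := by
      intro i
      rw [hM, hJidef]
      rw [Finset.sum_comm]
      simp
    have hJige : ∀ i a, J a ≤ Ji i (a i) := by
      intro i a
      have := Finset.single_le_sum
        (f := fun a' => if a' i = a i then J a' else 0)
        (fun a' _ => by split <;> simp [hJ]) (Finset.mem_univ a)
      simpa using this
    -- rewrite the difference
    have hdiff : ∀ a, J a * Real.log ((J a / M) / ∏ i, p i (a i))
        - J a * Real.log ((J a / M) / ∏ i, (Ji i (a i) / M))
        = J a * ∑ i, Real.log (Ji i (a i) / (M * p i (a i))) := by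
      intro a
      rcases eq_or_lt_of_le (hJ a) with h0 | h0
      · simp [← h0]
      · have hJiapos : ∀ i, 0 < Ji i (a i) := fun i => lt_of_lt_of_le h0 (hJige i a)
        have hxpos : 0 < J a / M := div_pos h0 hMpos
        have hP1 : (0:ℝ) < ∏ i, p i (a i) := Finset.prod_pos fun i _ => hp0 i (a i)
        have hP2 : (0:ℝ) < ∏ i, (Ji i (a i) / M) :=
          Finset.prod_pos fun i _ => div_pos (hJiapos i) hMpos
        rw [Real.log_div hxpos.ne' hP1.ne', Real.log_div hxpos.ne' hP2.ne',
          Real.log_prod (fun i _ => (hp0 i (a i)).ne'),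
          Real.log_prod (fun i _ => (div_pos (hJiapos i) hMpos).ne')]
        have hsum : ∑ i : Fin S, Real.log (Ji i (a i) / (M * p i (a i)))
            = ∑ i : Fin S, (Real.log (Ji i (a i) / M) - Real.log (p i (a i))) := by
          refine Finset.sum_congr rfl fun i _ => ?_
          rw [← Real.log_div (div_pos (hJiapos i) hMpos).ne' (hp0 i (a i)).ne', div_div]
        rw [hsum, Finset.sum_sub_distrib]
        ring
    have key : 0 ≤ ∑ a, J a * ∑ i, Real.log (Ji i (a i) / (M * p i (a i))) := by
      have hswap : ∑ a, J a * ∑ i, Real.log (Ji i (a i) / (M * p i (a i)))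
          = ∑ i : Fin S, ∑ v : Fin K, Ji i v * Real.log (Ji i v / (M * p i v)) := by
        simp_rw [Finset.mul_sum]
        rw [Finset.sum_comm]
        refine Finset.sum_congr rfl fun i _ => ?_
        have : ∀ v : Fin K, Ji i v * Real.log (Ji i v / (M * p i v))
            = ∑ a, if a i = v then J a * Real.log (Ji i v / (M * p i v)) else 0 := by
          intro v
          rw [hJidef]
          dsimp only
          rw [Finset.sum_mul]
          refine Finset.sum_congr rfl fun a _ => ?_
          split <;> simp
        rw [Finset.sum_congr rfl fun v _ => this v, Finset.sum_comm]
        refine Finset.sum_congr rfl fun a _ => ?_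
        simp
      rw [hswap]
      refine Finset.sum_nonneg fun i _ => ?_
      refine gibbs_aux (Ji i) (fun v => M * p i v) (hJinn i)
        (fun v => mul_pos hMpos (hp0 i v)) ?_
      rw [hJisum i, ← Finset.mul_sum, hp1 i, mul_one]
    have hrw : ∑ a, (J a * Real.log ((J a / M) / ∏ i, p i (a i))
        - J a * Real.log ((J a / M) / ∏ i, (Ji i (a i) / M)))
        = ∑ a, J a * ∑ i, Real.log (Ji i (a i) / (M * p i (a i))) :=
      Finset.sum_congr rfl fun a _ => hdiff a
    rw [Finset.sum_sub_distrib] at hrw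
    linarith

/-- **Proposition 2: latent-conditioned factorization lower bound.** Let
`(X, Y) ∼ q₀`, let `X_t` follow the masked forward chain from `X₀`, reaching the all-mask state
(`γ̄_T = 0`). For any generative model mixing, over `y ∼ q^Y`, conditional reverse chains that
factorize across positions (`p^θ_{t−1|t,y}(x_{t−1}|x_t,y) = ∏ᵢ p^{θ,i}(xⁱ_{t−1}|x_t,y)`), the
negative ELBO `L(θ) = E[H(q_{0|y}(·|Y))] + Σ_t E[KL(q_{t−1|t,y}(·|X_t,Y) ‖ p^θ_{t−1|t,y}(·|X_t,Y))]`
satisfies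
`L(θ) ≥ Σ_t E[KL(q_{t−1|t,y}(·|X_t,Y) ‖ ∏ᵢ qⁱ_{t−1|t,y}(·|X_t,Y))] + E[H(q_{0|y}(·|Y))]`. -/
theorem stmt_13 {K S T : ℕ} {β : Type*} [Fintype β] [DecidableEq β]
    (γ : Fin T → ℝ) (hγ : ∀ t, γ t ∈ Set.Icc (0 : ℝ) 1)
    (hmask : ∏ t, γ t = 0)
    (msk : Fin (K + 1)) (hmsk : msk = Fin.last K)
    (q0 : (Fin S → Fin (K + 1)) × β → ℝ)
    (hq00 : ∀ z, 0 ≤ q0 z) (hq01 : ∑ z, q0 z = 1)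
    (pfac : Fin T → β → (Fin S → Fin (K + 1)) → Fin S → Fin (K + 1) → ℝ)
    (hpfac0 : ∀ t y b i v, 0 < pfac t y b i v)
    (hpfac1 : ∀ t y b i, ∑ v, pfac t y b i v = 1) :
    ((-∑ y : β, ∑ x, q0 (x, y) *
        Real.log (q0 (x, y) / ∑ x', q0 (x', y)))
      + ∑ t : Fin T, ∑ y : β, ∑ b, ∑ a, yJoint γ msk q0 t y a b *
          Real.log ((yJoint γ msk q0 t y a b / yMarg γ msk q0 t.succ y b)
            / ∏ i, pfac t y b i (a i)))
    ≥ (∑ t : Fin T, ∑ y : β, ∑ b, ∑ a, yJoint γ msk q0 t y a b *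
          Real.log ((yJoint γ msk q0 t y a b / yMarg γ msk q0 t.succ y b)
            / ∏ i, ((∑ a' : Fin S → Fin (K + 1),
                      if a' i = a i then yJoint γ msk q0 t y a' b else 0)
                    / yMarg γ msk q0 t.succ y b)))
      + (-∑ y : β, ∑ x, q0 (x, y) *
          Real.log (q0 (x, y) / ∑ x', q0 (x', y))) := by
  have htok : ∀ (t : Fin T) (a b : Fin (K+1)), 0 ≤ tokStep (γ t) msk a b := by
    intro t a b
    have h0 := (hγ t).1
    have h1 := (hγ t).2
    unfold tokStep
    split_ifs <;> nlinarith
  have hpath : ∀ (y : β) (x : Fin (T+1) → (Fin S → Fin (K+1))),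
      0 ≤ yQpath γ msk q0 y x := by
    intro y x
    refine mul_nonneg (hq00 _) (Finset.prod_nonneg fun t _ => ?_)
    exact Finset.prod_nonneg fun i _ => htok t _ _
  have hJnn : ∀ (t : Fin T) (y : β) a b, 0 ≤ yJoint γ msk q0 t y a b := by
    intro t y a b
    refine Finset.sum_nonneg fun x _ => ?_
    split <;> simp [hpath]
  have hMsum : ∀ (t : Fin T) (y : β) b,
      yMarg γ msk q0 t.succ y b = ∑ a, yJoint γ msk q0 t y a b := by
    intro t y b
    unfold yMarg yJoint
    rw [Finset.sum_comm]
    refine Finset.sum_congr rfl fun x _ => ?_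
    by_cases h : x t.succ = b <;> simp [h]
  have key : (∑ t : Fin T, ∑ y : β, ∑ b, ∑ a, yJoint γ msk q0 t y a b *
          Real.log ((yJoint γ msk q0 t y a b / yMarg γ msk q0 t.succ y b)
            / ∏ i, ((∑ a' : Fin S → Fin (K + 1),
                      if a' i = a i then yJoint γ msk q0 t y a' b else 0)
                    / yMarg γ msk q0 t.succ y b)))
      ≤ ∑ t : Fin T, ∑ y : β, ∑ b, ∑ a, yJoint γ msk q0 t y a b *
          Real.log ((yJoint γ msk q0 t y a b / yMarg γ msk q0 t.succ y b)
            / ∏ i, pfac t y b i (a i)) := by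
    refine Finset.sum_le_sum fun t _ => Finset.sum_le_sum fun y _ =>
      Finset.sum_le_sum fun b _ => ?_
    exact block_aux (fun a => yJoint γ msk q0 t y a b) (fun i v => pfac t y b i v)
      (yMarg γ msk q0 t.succ y b) (fun a => hJnn t y a b) (hMsum t y b)
      (fun i v => hpfac0 t y b i v) (fun i => hpfac1 t y b i)
  linarith
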